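/- Let B be a left semi-brace. Then for all a, b, c ∈ B one has a·(b+c) = a·b + b + a·c + λ_b(b⁻). -/
import Mathlib


/-- A left semi-brace: `(B,+)` is a left cancellative semigroup, `(B,*)` is a group
(whose identity `1` plays the role of `0` in the additive notation of the paper, and
`a⁻¹` plays the role of `a⁻`), and `a ∘ (b + c) = a ∘ b + a ∘ (a⁻ + c)` holds. -/
class LeftSemiBrace (B : Type*) extends Group B, Add B where
  add_assoc : ∀ a b c : B, a + b + c = a + (b + c)
  add_left_cancel : ∀ a b c : B, a + b = a + c → b = c
  circ_add : ∀ a b c : B, a * (b + c) = a * b + a * (a⁻¹ + c)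

namespace LeftSemiBrace

variable {B : Type*} [LeftSemiBrace B]

/-- The set `E` of additive idempotents. -/
def E (B : Type*) [LeftSemiBrace B] : Set B := {e | e + e = e}

/-- The set `G = B + 0`. -/
def G (B : Type*) [LeftSemiBrace B] : Set B := {x | ∃ b : B, x = b + 1}

/-- `λ_a (b) = a ∘ (a⁻ + b)`. -/
def lam (a b : B) : B := a * (a⁻¹ + b)

/-- `ρ_b (a) = (a⁻ + b)⁻ ∘ b`. -/
def rho (b a : B) : B := (a⁻¹ + b)⁻¹ * b

/-- `a · b = λ_a(a⁻) + a ∘ b + λ_b(b⁻)`. -/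
def dot (a b : B) : B := lam a a⁻¹ + a * b + lam b b⁻¹

/-- The group part `g_b = b + 0` of an element `b`. -/
def gp (b : B) : B := b + 1

/-- The additive inverse (within the group `(G,+)`) of the group part of an element:
for `g ∈ G` one has `neg g = -g`, since `-g_a = λ_a(a⁻) = a ∘ (a⁻ + a⁻)`. -/
def neg (a : B) : B := a * (a⁻¹ + a⁻¹)

/-- The idempotent part `e_b = -g_b + b` of an element `b`. -/
def ep (b : B) : B := neg (gp b) + b

/-- `S` is a subsemigroup of `(B,+)`. -/
def IsAddSubsemigroup (S : Set B) : Prop := ∀ x ∈ S, ∀ y ∈ S, x + y ∈ S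

/-- `S` is a subgroup of the multiplicative group `(B,∘)`. -/
def IsCircSubgroup (S : Set B) : Prop :=
  (1 : B) ∈ S ∧ (∀ x ∈ S, ∀ y ∈ S, x * y ∈ S) ∧ ∀ x ∈ S, x⁻¹ ∈ S

/-- `S` is a normal subgroup of the multiplicative group `(B,∘)`. -/
def IsCircNormal (S : Set B) : Prop :=
  IsCircSubgroup S ∧ ∀ x ∈ S, ∀ b : B, b * x * b⁻¹ ∈ S

/-- `S` is a subgroup of the group `(G,+)`. -/
def IsAddSubgroupOfG (S : Set B) : Prop :=
  S ⊆ G B ∧ (1 : B) ∈ S ∧ (∀ x ∈ S, ∀ y ∈ S, x + y ∈ S) ∧ ∀ x ∈ S, neg x ∈ S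

/-- `S` is a normal subgroup of the group `(G,+)`. -/
def IsAddNormalSubgroupOfG (S : Set B) : Prop :=
  IsAddSubgroupOfG S ∧ ∀ g ∈ G B, ∀ x ∈ S, g + x + neg g ∈ S

/-- `I` is an ideal of the left semi-brace `B` (Definition 17 of Catino–Colazzo–Stefanelli):
`I` is a subsemigroup of `(B,+)`, a normal subgroup of `(B,∘)`, `I ∩ G` is a normal
subgroup of `(G,+)`, `ρ_b(n) ∈ I` for all `b ∈ B`, `n ∈ I ∩ G`, and `λ_g(e) ∈ I` for all
`g ∈ G`, `e ∈ I ∩ E`. -/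
def IsIdeal (I : Set B) : Prop :=
  IsAddSubsemigroup I ∧ IsCircNormal I ∧ IsAddNormalSubgroupOfG (I ∩ G B) ∧
    (∀ b : B, ∀ n ∈ I ∩ G B, rho b n ∈ I) ∧
    (∀ g ∈ G B, ∀ e ∈ I ∩ E B, lam g e ∈ I)

/-- `I` is a left ideal of the left semi-brace `B`. -/
def IsLeftIdeal (I : Set B) : Prop :=
  (∀ x ∈ I, x + 1 ∈ I) ∧ IsAddSubgroupOfG (I ∩ G B) ∧
    (∀ g ∈ G B, ∀ x ∈ I, lam g x ∈ I) ∧ IsCircSubgroup I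

/-- The subgroup of `(G,+)` generated by a subset `S` of `G`. -/
def addClosure (S : Set B) : Set B :=
  ⋂₀ {T : Set B | S ⊆ T ∧ (1 : B) ∈ T ∧ (∀ x ∈ T, ∀ y ∈ T, x + y ∈ T) ∧ ∀ x ∈ T, neg x ∈ T}

/-- `X · Y`: the subgroup of `(G,+)` generated by `{x · y : x ∈ X, y ∈ Y}`. -/
def dotSet (X Y : Set B) : Set B := addClosure {z | ∃ x ∈ X, ∃ y ∈ Y, z = dot x y}

/-- `S + E = {s + e : s ∈ S, e ∈ E}`. -/
def addE (S : Set B) : Set B := {z | ∃ s ∈ S, ∃ e ∈ E B, z = s + e}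

/-- The right series of `B`: `rightSeries B n = B^(n+1)`, where `B^(1) = B` and
`B^(n+1) = B^(n) · B + E`. -/
def rightSeries (B : Type*) [LeftSemiBrace B] : ℕ → Set B
  | 0 => Set.univ
  | n + 1 => addE (dotSet (rightSeries B n) Set.univ)

/-- The left series of `B`: `leftSeries B n = B^(n+1)`, where `B^1 = B` and
`B^(n+1) = B · B^n + E`. -/
def leftSeries (B : Type*) [LeftSemiBrace B] : ℕ → Set B
  | 0 => Set.univ
  | n + 1 => addE (dotSet Set.univ (leftSeries B n))

/-- The right series of the skew left brace `G`: `rightSeriesG B n = G^(n+1)`, where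
`G^(1) = G` and `G^(n+1) = G^(n) · G`. -/
def rightSeriesG (B : Type*) [LeftSemiBrace B] : ℕ → Set B
  | 0 => G B
  | n + 1 => dotSet (rightSeriesG B n) (G B)

/-- The series `bracketSeries B n = B^[n+1]`, where `B^[1] = B` and `B^[n+1] = H_n + E`
with `H_n` the subgroup of `(G,+)` generated by `⋃_{i=1}^{n} B^[i] · B^[n+1-i]`. -/
def bracketSeries (B : Type*) [LeftSemiBrace B] : ℕ → Set B
  | 0 => Set.univ
  | n + 1 =>
      addE (addClosure (⋃ i : Fin (n + 1),
        dotSet (bracketSeries B i.1) (bracketSeries B (n - i.1))))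
  decreasing_by
  · exact i.isLt
  · exact Nat.lt_succ_of_le (Nat.sub_le n i.1)

/-- The socle `Soc(B) = {a ∈ B : ρ_a = ρ_0, λ_a = λ_0}`. -/
def Soc (B : Type*) [LeftSemiBrace B] : Set B :=
  {a | rho a = rho (1 : B) ∧ lam a = lam (1 : B)}

/-- The generalized socle `Zoc(B) = Soc(B) + E`. -/
def Zoc (B : Type*) [LeftSemiBrace B] : Set B :=
  {z | ∃ a ∈ Soc B, ∃ e ∈ E B, z = a + e}

/-- The lower central series of the group `(G,+)`:  `γ_1 = G` and `γ_{n+1}` is the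
subgroup of `(G,+)` generated by the additive commutators `-x - y + x + y` with
`x ∈ γ_n`, `y ∈ G`. -/
def lowerCentralSeriesG (B : Type*) [LeftSemiBrace B] : ℕ → Set B
  | 0 => G B
  | n + 1 => addClosure
      {z | ∃ x ∈ lowerCentralSeriesG B n, ∃ y ∈ G B, z = neg x + neg y + x + y}

/-- The group `(G,+)` is nilpotent. -/
def IsNilpotentGAdd (B : Type*) [LeftSemiBrace B] : Prop :=
  ∃ n : ℕ, lowerCentralSeriesG B n = {(1 : B)}

lemma aassoc (a b c : B) : a + b + c = a + (b + c) := add_assoc a b c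

lemma acancel {a b c : B} (h : a + b = a + c) : b = c := add_left_cancel a b c h

/-- `1` is a left additive identity. -/
lemma one_add (c : B) : (1 : B) + c = c := by
  have h := circ_add (1 : B) 1 c
  simp only [one_mul, inv_one] at h
  exact (acancel h).symm

lemma circ_add' (a b c : B) : a * (b + c) = a * b + lam a c := circ_add a b c

/-- `λ_a` is additive. -/
lemma lam_add (a u v : B) : lam a (u + v) = lam a u + lam a v := by
  have h := circ_add a (a⁻¹ + u) v
  unfold lam
  rw [aassoc] at h
  exact h

/-- `λ` is multiplicative in the index. -/
lemma lam_lam (a b c : B) : lam a (lam b c) = lam (a * b) c := by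
  have h : b * (b⁻¹ * a⁻¹ + c) = a⁻¹ + lam b c := by
    have := circ_add b (b⁻¹ * a⁻¹) c
    rw [mul_inv_cancel_left] at this
    exact this
  unfold lam
  rw [mul_inv_rev, mul_assoc, h]
  rfl

lemma lam_one_idx (c : B) : lam (1 : B) c = c := by
  unfold lam
  rw [inv_one, one_mul, one_add]

lemma lam_lam_inv (a c : B) : lam a (lam a⁻¹ c) = c := by
  rw [lam_lam, mul_inv_cancel, lam_one_idx]

/-- `a + λ_a x = a ∘ x`. -/
lemma add_lam (a x : B) : a + lam a x = a * x := by
  have h := circ_add a 1 x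
  rw [one_add, mul_one] at h
  exact h.symm

lemma add_lam_inv_self (x : B) : x + lam x x⁻¹ = 1 := by
  rw [add_lam, mul_inv_cancel]

/-- `λ_{b+c}((b+c)⁻) = λ_c(c⁻) + λ_b(b⁻)`. -/
lemma lam_inv_add (b c : B) : lam (b + c) (b + c)⁻¹ = lam c c⁻¹ + lam b b⁻¹ := by
  apply acancel (a := b + c)
  rw [add_lam_inv_self, ← aassoc, aassoc b c (lam c c⁻¹), add_lam_inv_self, aassoc,
    one_add, add_lam_inv_self]

/-- `λ_b(1)` is a left additive identity. -/
lemma lam_one_addl (b z : B) : lam b 1 + z = z := by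
  conv_lhs => rw [← lam_lam_inv b z]
  rw [← lam_add, one_add, lam_lam_inv]

lemma lam_inv_add_self (b : B) : lam b b⁻¹ + b = lam b 1 := by
  have h1 : b⁻¹ + lam b⁻¹ b = 1 := by rw [add_lam, inv_mul_cancel]
  calc lam b b⁻¹ + b = lam b b⁻¹ + lam b (lam b⁻¹ b) := by rw [lam_lam_inv]
    _ = lam b (b⁻¹ + lam b⁻¹ b) := (lam_add _ _ _).symm
    _ = lam b 1 := by rw [h1]

/-- `a · x = λ_a(x) + λ_x(x⁻)`. -/
lemma dot_eq (a x : B) : dot a x = lam a x + lam x x⁻¹ := by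
  unfold dot
  congr 1
  calc lam a a⁻¹ + a * x = lam a a⁻¹ + lam a (lam a⁻¹ (a * x)) := by rw [lam_lam_inv]
    _ = lam a (a⁻¹ + lam a⁻¹ (a * x)) := (lam_add _ _ _).symm
    _ = lam a (a⁻¹ * (a * x)) := by rw [add_lam]
    _ = lam a x := by rw [inv_mul_cancel_left]

/-- Proposition `dot`-sum rule: for all `a, b, c ∈ B`,
`a·(b+c) = a·b + b + a·c + λ_b(b⁻)`. -/
theorem dot_add (a b c : B) :
    dot a (b + c) = dot a b + b + dot a c + lam b b⁻¹ := by
  rw [dot_eq a (b + c), dot_eq a b, dot_eq a c, lam_inv_add, lam_add]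
  calc lam a b + lam a c + (lam c c⁻¹ + lam b b⁻¹)
      = lam a b + (lam a c + lam c c⁻¹ + lam b b⁻¹) := by rw [aassoc, aassoc]
    _ = lam a b + (lam b 1 + (lam a c + lam c c⁻¹ + lam b b⁻¹)) := by rw [lam_one_addl]
    _ = lam a b + (lam b b⁻¹ + b + (lam a c + lam c c⁻¹ + lam b b⁻¹)) := by
        rw [lam_inv_add_self]
    _ = lam a b + lam b b⁻¹ + b + (lam a c + lam c c⁻¹) + lam b b⁻¹ := by
        simp only [aassoc]

end LeftSemiBrace
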